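/- Let p be a prime, R a commutative ring in which p = 0 (an 𝔽_p-algebra), F₁ and F₂ formal group laws over R, and φ : F₁ → F₂ an isomorphism of formal group laws. Let u₁ and u₂ denote the coefficients of T^p in the p-series [p]_{F₁} and [p]_{F₂} respectively, and let b = φ′(0) be the linear coefficient of φ (a unit of R). Then u₁ = b^{p−1} · u₂. (That is, the section v₁ = u₁·η^{⊗(p−1)} of ω^{⊗(p−1)} is an isomorphism invariant.) -/

import Mathlib

noncomputable section

open PowerSeries

namespace FGL

variable {R : Type*} [CommRing R]

/-- Total degree of a monomial exponent. -/
def deg (m : Fin 2 →₀ ℕ) : ℕ := m 0 + m 1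

/-- Formal partial derivative of a two-variable power series with respect to variable `i`. -/
def pderiv2 (i : Fin 2) (F : MvPowerSeries (Fin 2) R) : MvPowerSeries (Fin 2) R :=
  fun m => ((m i + 1 : ℕ) : R) * MvPowerSeries.coeff (m + Finsupp.single i 1) F

/-- Substitution of two power series (in any multivariable power series ring, with zero
constant terms) into a two-variable power series: `F (a, b)`. -/
def subst2 {τ : Type*} (a b : MvPowerSeries τ R) (F : MvPowerSeries (Fin 2) R) :
    MvPowerSeries τ R :=
  fun m => ∑ i ∈ Finset.range ((m.sum fun _ k => k) + 1),
    ∑ j ∈ Finset.range ((m.sum fun _ k => k) + 1),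
      MvPowerSeries.coeff (Finsupp.single 0 i + Finsupp.single 1 j) F *
        MvPowerSeries.coeff m (a ^ i * b ^ j)

/-- Substitution of two one-variable power series into a two-variable power series:
`F (a, b)`, a one-variable power series. -/
def subst2one (a b : PowerSeries R) (F : MvPowerSeries (Fin 2) R) : PowerSeries R :=
  PowerSeries.mk fun n => ∑ i ∈ Finset.range (n + 1), ∑ j ∈ Finset.range (n + 1),
    MvPowerSeries.coeff (Finsupp.single 0 i + Finsupp.single 1 j) F *
      PowerSeries.coeff n (a ^ i * b ^ j)

/-- Substitution of a multivariable power series (with zero constant term) into a one-variable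
power series: `f (a)`. -/
def psubst {τ : Type*} (a : MvPowerSeries τ R) (f : PowerSeries R) : MvPowerSeries τ R :=
  fun m => ∑ i ∈ Finset.range ((m.sum fun _ k => k) + 1),
    PowerSeries.coeff i f * MvPowerSeries.coeff m (a ^ i)

/-- Composition of one-variable power series: `f (a)`. -/
def pcomp (a f : PowerSeries R) : PowerSeries R :=
  PowerSeries.mk fun n => ∑ i ∈ Finset.range (n + 1),
    PowerSeries.coeff i f * PowerSeries.coeff n (a ^ i)

/-- `F` is a (one-dimensional, commutative) formal group law over `R`:
`F(X,0) = X`, `F(0,Y) = Y`, `F(F(X,Y),Z) = F(X,F(Y,Z))` and `F(X,Y) = F(Y,X)`. -/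
def IsFGL (F : MvPowerSeries (Fin 2) R) : Prop :=
  subst2 (MvPowerSeries.X 0) 0 F = MvPowerSeries.X 0 ∧
  subst2 0 (MvPowerSeries.X 1) F = MvPowerSeries.X 1 ∧
  subst2 (subst2 (MvPowerSeries.X 0) (MvPowerSeries.X 1) F) (MvPowerSeries.X 2) F
    = subst2 (MvPowerSeries.X 0 : MvPowerSeries (Fin 3) R)
        (subst2 (MvPowerSeries.X 1) (MvPowerSeries.X 2) F) F ∧
  subst2 (MvPowerSeries.X 1) (MvPowerSeries.X 0) F = F

/-- `φ` is a homomorphism of formal group laws `F → G`: it has zero constant term and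
`φ(F(X,Y)) = G(φ(X), φ(Y))`. -/
def IsFGLHom (F G : MvPowerSeries (Fin 2) R) (φ : PowerSeries R) : Prop :=
  PowerSeries.constantCoeff φ = 0 ∧
  psubst F φ =
    subst2 (psubst (MvPowerSeries.X 0) φ) (psubst (MvPowerSeries.X 1) φ) G

/-- Evaluation `F(0, T)` of a two-variable power series at `X = 0`, `Y = T`. -/
def evalX0 (F : MvPowerSeries (Fin 2) R) : PowerSeries R :=
  PowerSeries.mk fun n => MvPowerSeries.coeff (Finsupp.single 1 n) F

/-- Evaluation `F(T, 0)` of a two-variable power series at `X = T`, `Y = 0`. -/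
def evalY0 (F : MvPowerSeries (Fin 2) R) : PowerSeries R :=
  PowerSeries.mk fun n => MvPowerSeries.coeff (Finsupp.single 0 n) F

/-- The `n`-series of a formal group law: `[1](T) = T`, `[n+1](T) = F(T, [n](T))`. -/
def nSeries (F : MvPowerSeries (Fin 2) R) : ℕ → PowerSeries R
  | 0 => 0
  | 1 => PowerSeries.X
  | n + 2 => subst2one PowerSeries.X (nSeries F (n + 1)) F

end FGL

/-!
Over any ring, `[n](x)` is `n • x` in the commutative monoid of points of the formal group law,
and `φ` is additive on points, so `φ ∘ [p]_{F₁} = [p]_{F₂} ∘ φ`.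
In characteristic `p` the series `[p](T)` has order at least `p`: its linear coefficient is
`p = 0`, and if `[p](T) = c Tⁿ + O(Tⁿ⁺¹)` with `2 ≤ n < p`, comparing the coefficients of
`Xⁿ⁻¹Y` in `[p](F(X,Y)) = F([p]X, [p]Y)` gives `n c = 0`, where `n` is a unit.
Comparing the coefficients of `Tᵖ` in `φ([p]_{F₁}(T)) = [p]_{F₂}(φ(T))` then gives
`b u₁ = u₂ bᵖ`, and `b` is invertible.
-/

namespace MvPowerSeries

variable {R : Type*} [CommRing R] {σ τ : Type*}

theorem le_order_pow_mul_pow {a b : MvPowerSeries τ R} (ha : constantCoeff a = 0)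
    (hb : constantCoeff b = 0) (i j : ℕ) :
    ((i + j : ℕ) : ℕ∞) ≤ (a ^ i * b ^ j).order := by
  push_cast
  exact (add_le_add (le_order_pow_of_constantCoeff_eq_zero i ha)
    (le_order_pow_of_constantCoeff_eq_zero j hb)).trans le_order_mul

theorem coeff_pow_eq_zero_of_degree_lt {a : MvPowerSeries τ R} {n d : ℕ}
    (ha : (n : ℕ∞) ≤ a.order) {e : τ →₀ ℕ} (he : e.degree < d * n) :
    MvPowerSeries.coeff e (a ^ d) = 0 := by
  refine coeff_of_lt_order (lt_of_lt_of_le ?_ (le_order_pow d))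
  calc (e.degree : ℕ∞) < ((d * n : ℕ) : ℕ∞) := by exact_mod_cast he
    _ = d • (n : ℕ∞) := by push_cast; rw [nsmul_eq_mul]
    _ ≤ d • a.order := nsmul_le_nsmul_right ha d

theorem le_order_pow_sub_pow {a b : MvPowerSeries τ R} (ha : constantCoeff a = 0)
    (hb : constantCoeff b = 0) (hab : 2 ≤ (a - b).order) :
    ∀ n : ℕ, ((n + 1 : ℕ) : ℕ∞) ≤ (a ^ n - b ^ n).order
  | 0 => by simp
  | n + 1 => by
    have ih := le_order_pow_sub_pow ha hb hab n
    rw [show a ^ (n + 1) - b ^ (n + 1) = a * (a ^ n - b ^ n) + (a - b) * b ^ n by ring]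
    calc ((n + 1 + 1 : ℕ) : ℕ∞)
        ≤ min (a.order + (a ^ n - b ^ n).order) ((a - b).order + (b ^ n).order) := by
          refine le_min ?_ ?_
          · calc ((n + 1 + 1 : ℕ) : ℕ∞) = 1 + ((n + 1 : ℕ) : ℕ∞) := by push_cast; ring
              _ ≤ _ := add_le_add (one_le_order_iff_constCoeff_eq_zero.2 ha) ih
          · calc ((n + 1 + 1 : ℕ) : ℕ∞) = 2 + (n : ℕ∞) := by push_cast; ring
              _ ≤ _ := add_le_add hab (le_order_pow_of_constantCoeff_eq_zero n hb)
      _ ≤ min (a * (a ^ n - b ^ n)).order ((a - b) * b ^ n).order :=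
          min_le_min le_order_mul le_order_mul
      _ ≤ _ := min_order_le_add

theorem coeff_X_zero_add_X_one_pow (m : ℕ) :
    MvPowerSeries.coeff (Finsupp.single 0 m + Finsupp.single 1 1)
      ((X 0 + X 1 : MvPowerSeries (Fin 2) R) ^ (m + 1)) = m + 1 := by
  have h := PowerSeries.coeff_subst_X_zero_add_X_one (R := R) (PowerSeries.X ^ (m + 1))
    (Finsupp.single 0 m + Finsupp.single 1 1)
  rw [PowerSeries.subst_pow (.of_constantCoeff_zero (by simp)),
    PowerSeries.subst_X (.of_constantCoeff_zero (by simp))] at h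
  simpa [Nat.choose_succ_self_right] using h

theorem subst_powerSeries_subst {a : MvPowerSeries σ R} (ha : PowerSeries.HasSubst a)
    {b : σ → MvPowerSeries τ R} (hb : HasSubst b) (f : PowerSeries R) :
    MvPowerSeries.subst b (f.subst a) = f.subst (MvPowerSeries.subst b a) :=
  subst_comp_subst_apply ha.const hb f

theorem hasSubst_pair {a b : MvPowerSeries τ R} (ha : constantCoeff a = 0)
    (hb : constantCoeff b = 0) : HasSubst ![a, b] :=
  hasSubst_of_constantCoeff_zero fun s => by fin_cases s <;> simpa

end MvPowerSeries

namespace PowerSeries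

variable {R : Type*} [CommRing R] {τ : Type*}

theorem coeff_subst_of_le_order_left {f : PowerSeries R} {n : ℕ} (hf : (n : ℕ∞) ≤ f.order)
    {a : MvPowerSeries τ R} (ha : MvPowerSeries.constantCoeff a = 0) {e : τ →₀ ℕ}
    (he : e.degree = n) :
    MvPowerSeries.coeff e (f.subst a) = coeff n f * MvPowerSeries.coeff e (a ^ n) := by
  have ha1 : ((1 : ℕ) : ℕ∞) ≤ a.order := by
    simpa using MvPowerSeries.one_le_order_iff_constCoeff_eq_zero.2 ha
  rw [coeff_subst (.of_constantCoeff_zero ha), finsum_eq_single _ n, smul_eq_mul]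
  intro d hd
  rcases lt_or_gt_of_ne hd with hlt | hgt
  · rw [coeff_of_lt_order d ((Nat.cast_lt.2 hlt).trans_le hf), zero_smul]
  · rw [MvPowerSeries.coeff_pow_eq_zero_of_degree_lt ha1 (by omega), smul_zero]

theorem coeff_subst_of_le_order_right (f : PowerSeries R) {n : ℕ} (hn : n ≠ 0)
    {a : MvPowerSeries τ R} (ha : (n : ℕ∞) ≤ a.order) {e : τ →₀ ℕ}
    (he : e.degree = n) :
    MvPowerSeries.coeff e (f.subst a) = coeff 1 f * MvPowerSeries.coeff e a := by
  classical
  have h1n : (1 : ℕ∞) ≤ n := by exact_mod_cast Nat.one_le_iff_ne_zero.2 hn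
  have ha0 : MvPowerSeries.constantCoeff a = 0 :=
    MvPowerSeries.one_le_order_iff_constCoeff_eq_zero.1 (h1n.trans ha)
  rw [coeff_subst (.of_constantCoeff_zero ha0), finsum_eq_single _ 1, pow_one, smul_eq_mul]
  intro d hd
  rcases Nat.lt_or_gt_of_ne hd with hlt | hgt
  · obtain rfl : d = 0 := by omega
    rw [pow_zero, MvPowerSeries.coeff_one, if_neg (by rintro rfl; simp at he; omega), smul_zero]
  · rw [MvPowerSeries.coeff_pow_eq_zero_of_degree_lt ha
      (by rw [he]; nlinarith [Nat.pos_of_ne_zero hn]), smul_zero]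

theorem coeff_pow_self_of_constantCoeff_eq_zero {φ : PowerSeries R}
    (hφ : constantCoeff φ = 0) (n : ℕ) : coeff n (φ ^ n) = coeff 1 φ ^ n := by
  obtain ⟨ψ, rfl⟩ := X_dvd_iff.2 hφ
  rw [mul_pow, coeff_X_pow_mul', if_pos le_rfl, Nat.sub_self, coeff_zero_eq_constantCoeff_apply,
    map_pow, coeff_succ_X_mul, coeff_zero_eq_constantCoeff_apply]

end PowerSeries

theorem isUnit_natCast_of_lt_of_prime {R : Type*} [CommRing R] {p k : ℕ} (hp : p.Prime)
    (hchar : (p : R) = 0) (hk0 : k ≠ 0) (hkp : k < p) : IsUnit (k : R) := by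
  have hcop : k.Coprime p := ((Nat.Prime.coprime_iff_not_dvd hp).2
    (Nat.not_dvd_of_pos_of_lt (Nat.pos_of_ne_zero hk0) hkp)).symm
  exact isCoprime_zero_right.1
    (by simpa [hchar] using (Nat.isCoprime_iff_coprime.2 hcop).map (Int.castRingHom R))

theorem Finsupp.eq_single_zero_add_single_one {M : Type*} [AddMonoid M] (d : Fin 2 →₀ M) :
    d = Finsupp.single 0 (d 0) + Finsupp.single 1 (d 1) := by
  ext i
  fin_cases i <;> simp

namespace FormalGroup

variable {R : Type*} [CommRing R] {τ : Type*} (F : FormalGroup R)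

theorem two_le_order_sub_X_add_X :
    2 ≤ (F.toPowerSeries - (MvPowerSeries.X 0 + MvPowerSeries.X 1)).order := by
  refine MvPowerSeries.nat_le_order fun d hd => ?_
  rw [Finsupp.degree_eq_sum, Fin.sum_univ_two] at hd
  have hd' : d 0 + d 1 < 2 := by exact_mod_cast hd
  rw [Finsupp.eq_single_zero_add_single_one d]
  have : (d 0 = 0 ∧ d 1 = 0) ∨ (d 0 = 1 ∧ d 1 = 0) ∨ (d 0 = 0 ∧ d 1 = 1) := by omega
  rcases this with ⟨h0, h1⟩ | ⟨h0, h1⟩ | ⟨h0, h1⟩ <;>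
    simp [h0, h1, MvPowerSeries.coeff_X, F.zero_constantCoeff, F.lin_coeff_X, F.lin_coeff_Y,
      Finsupp.single_left_inj]

theorem coeff_subst_eq_add {a b : MvPowerSeries τ R} {n : ℕ} (hn : n ≠ 0)
    (ha : (n : ℕ∞) ≤ a.order) (hb : (n : ℕ∞) ≤ b.order) {e : τ →₀ ℕ}
    (he : e.degree < 2 * n) :
    MvPowerSeries.coeff e (MvPowerSeries.subst ![a, b] F.toPowerSeries) =
      MvPowerSeries.coeff e a + MvPowerSeries.coeff e b := by
  have h1n : (1 : ℕ∞) ≤ n := by exact_mod_cast Nat.one_le_iff_ne_zero.2 hn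
  have hab := MvPowerSeries.hasSubst_pair
    (MvPowerSeries.one_le_order_iff_constCoeff_eq_zero.1 (h1n.trans ha))
    (MvPowerSeries.one_le_order_iff_constCoeff_eq_zero.1 (h1n.trans hb))
  set G := F.toPowerSeries - (MvPowerSeries.X 0 + MvPowerSeries.X 1)
  have hG : (2 * n : ℕ) ≤ (MvPowerSeries.subst ![a, b] G).order := by
    refine le_trans ?_ (MvPowerSeries.le_order_subst hab G)
    calc ((2 * n : ℕ) : ℕ∞) = n * 2 := by push_cast; ring
      _ ≤ (⨅ i, (![a, b] i).order) * G.order :=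
        mul_le_mul' (le_iInf fun i => by fin_cases i; exacts [ha, hb])
          F.two_le_order_sub_X_add_X
  rw [show F.toPowerSeries = MvPowerSeries.X 0 + MvPowerSeries.X 1 + G by ring,
    MvPowerSeries.subst_add hab, MvPowerSeries.subst_add hab, MvPowerSeries.subst_X hab,
    MvPowerSeries.subst_X hab, map_add, map_add,
    MvPowerSeries.coeff_of_lt_order ((Nat.cast_lt.2 he).trans_le hG)]
  simp

theorem Point.hasSubst_pair {σ : Type*} {F : FormalGroup R} (x y : F.Point σ) :
    MvPowerSeries.HasSubst ![x.val, y.val] :=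
  MvPowerSeries.hasSubst_of_constantCoeff_nilpotent fun s => by
    fin_cases s
    exacts [x.prop, y.prop]

end FormalGroup

namespace FGL

variable {R : Type*} [CommRing R] {τ : Type*}

lemma prod_pow_single_add_single (a b : MvPowerSeries τ R) (i j : ℕ) :
    ((Finsupp.single 0 i + Finsupp.single 1 j : Fin 2 →₀ ℕ).prod fun s k => ![a, b] s ^ k)
      = a ^ i * b ^ j := by
  rw [Finsupp.prod_fintype _ _ (by simp), Fin.prod_univ_two]
  simp

lemma coeff_subst2 (a b : MvPowerSeries τ R) (F : MvPowerSeries (Fin 2) R) (e : τ →₀ ℕ) :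
    MvPowerSeries.coeff e (subst2 a b F) =
      ∑ i ∈ Finset.range (e.degree + 1), ∑ j ∈ Finset.range (e.degree + 1),
        MvPowerSeries.coeff (Finsupp.single 0 i + Finsupp.single 1 j) F *
          MvPowerSeries.coeff e (a ^ i * b ^ j) := rfl

theorem subst2_eq_subst {a b : MvPowerSeries τ R} (ha : MvPowerSeries.constantCoeff a = 0)
    (hb : MvPowerSeries.constantCoeff b = 0) (F : MvPowerSeries (Fin 2) R) :
    subst2 a b F = MvPowerSeries.subst ![a, b] F := by
  ext e
  set N := e.degree + 1
  set pair : ℕ × ℕ → (Fin 2 →₀ ℕ) :=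
    fun ij => Finsupp.single 0 ij.1 + Finsupp.single 1 ij.2
  have hinj : Set.InjOn pair ↑(Finset.range N ×ˢ Finset.range N) := by
    rintro ⟨i, j⟩ - ⟨i', j'⟩ - h
    have h0 := DFunLike.congr_fun h 0
    have h1 := DFunLike.congr_fun h 1
    simp only [pair, Finsupp.add_apply, Finsupp.single_apply] at h0 h1
    simp_all
  rw [MvPowerSeries.coeff_subst (MvPowerSeries.hasSubst_pair ha hb),
    finsum_eq_sum_of_support_subset (s := (Finset.range N ×ˢ Finset.range N).image pair),
    Finset.sum_image hinj, Finset.sum_product]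
  · simp only [pair, prod_pow_single_add_single, smul_eq_mul]
    rfl
  · intro d hd
    rw [Function.mem_support, Finsupp.eq_single_zero_add_single_one d,
      prod_pow_single_add_single] at hd
    have hle : d 0 + d 1 < N := by
      by_contra! hlt
      have h0 : MvPowerSeries.coeff e (a ^ d 0 * b ^ d 1) = 0 :=
        MvPowerSeries.coeff_of_lt_order
          ((Nat.cast_lt.2 (by omega)).trans_le (MvPowerSeries.le_order_pow_mul_pow ha hb _ _))
      exact hd (by rw [h0, smul_zero])
    refine Finset.mem_image.2 ⟨(d 0, d 1), ?_, (Finsupp.eq_single_zero_add_single_one d).symm⟩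
    simp only [Finset.mem_product, Finset.mem_range]
    omega

theorem subst2one_eq_subst {a b : PowerSeries R} (ha : PowerSeries.constantCoeff a = 0)
    (hb : PowerSeries.constantCoeff b = 0) (F : MvPowerSeries (Fin 2) R) :
    subst2one a b F = MvPowerSeries.subst ![a, b] F := by
  rw [← subst2_eq_subst ha hb]
  ext n
  show _ = MvPowerSeries.coeff (Finsupp.single () n) (subst2 a b F)
  rw [subst2one, PowerSeries.coeff_mk, coeff_subst2, Finsupp.degree_single]
  rfl

theorem psubst_eq_subst {a : MvPowerSeries τ R} (ha : MvPowerSeries.constantCoeff a = 0)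
    (f : PowerSeries R) : psubst a f = f.subst a := by
  ext e
  rw [PowerSeries.coeff_subst (.of_constantCoeff_zero ha),
    finsum_eq_sum_of_support_subset (s := Finset.range (e.degree + 1))]
  · rfl
  · intro d hd
    contrapose! hd
    simp only [Finset.coe_range, Set.mem_Iio, not_lt] at hd
    simp [MvPowerSeries.coeff_of_lt_order ((Nat.cast_lt.2 (by omega : e.degree < d)).trans_le
      (MvPowerSeries.le_order_pow_of_constantCoeff_eq_zero d ha))]

variable {F G : MvPowerSeries (Fin 2) R} {φ : PowerSeries R}

namespace IsFGL

theorem constantCoeff_eq_zero (hF : IsFGL F) : MvPowerSeries.constantCoeff F = 0 := by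
  have h := congrArg (MvPowerSeries.coeff 0) hF.1
  rw [coeff_subst2] at h
  simpa using h

theorem coeff_single_zero_one (hF : IsFGL F) :
    MvPowerSeries.coeff (Finsupp.single 0 1) F = 1 := by
  have h := congrArg (MvPowerSeries.coeff (Finsupp.single 0 1)) hF.1
  rw [coeff_subst2] at h
  simpa [Finset.sum_range_succ, MvPowerSeries.coeff_X, Finsupp.single_eq_zero,
    hF.constantCoeff_eq_zero] using h

theorem coeff_single_one_one (hF : IsFGL F) :
    MvPowerSeries.coeff (Finsupp.single 1 1) F = 1 := by
  have h := congrArg (MvPowerSeries.coeff (Finsupp.single 1 1)) hF.2.1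
  rw [coeff_subst2] at h
  simpa [Finset.sum_range_succ, MvPowerSeries.coeff_X, Finsupp.single_eq_zero,
    hF.constantCoeff_eq_zero] using h

def toFormalGroup (hF : IsFGL F) : FormalGroup R where
  toPowerSeries := F
  zero_constantCoeff := hF.constantCoeff_eq_zero
  lin_coeff_X := hF.coeff_single_zero_one
  lin_coeff_Y := hF.coeff_single_one_one
  assoc := by
    have hX (i : Fin 3) :
        MvPowerSeries.constantCoeff (MvPowerSeries.X i : MvPowerSeries (Fin 3) R) = 0 :=
      MvPowerSeries.constantCoeff_X i
    have hFX (i j : Fin 3) : MvPowerSeries.constantCoeff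
        (MvPowerSeries.subst ![(MvPowerSeries.X i : MvPowerSeries (Fin 3) R),
          MvPowerSeries.X j] F) = 0 :=
      MvPowerSeries.constantCoeff_subst_eq_zero (MvPowerSeries.hasSubst_pair (hX i) (hX j))
        (fun s => by fin_cases s <;> simp) hF.constantCoeff_eq_zero
    have h := hF.2.2.1
    rwa [subst2_eq_subst (hX 0) (hX 1), subst2_eq_subst (hX 1) (hX 2),
      subst2_eq_subst (hFX 0 1) (hX 2), subst2_eq_subst (hX 0) (hFX 1 2)] at h

@[simp]
theorem toFormalGroup_toPowerSeries (hF : IsFGL F) : hF.toFormalGroup.toPowerSeries = F := rfl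

theorem isComm (hF : IsFGL F) : hF.toFormalGroup.IsComm where
  comm := by
    have h := hF.2.2.2
    rw [subst2_eq_subst (MvPowerSeries.constantCoeff_X 1) (MvPowerSeries.constantCoeff_X 0)] at h
    exact h.symm

theorem constantCoeff_nSeries (hF : IsFGL F) :
    ∀ n, PowerSeries.constantCoeff (nSeries F n) = 0
  | 0 => by simp [nSeries]
  | 1 => PowerSeries.constantCoeff_X
  | n + 2 => by
    rw [nSeries, ← PowerSeries.coeff_zero_eq_constantCoeff_apply]
    simp [subst2one, hF.constantCoeff_eq_zero]

theorem subst_nSeries_eq_nsmul (hF : IsFGL F) (x : hF.toFormalGroup.Point τ) :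
    ∀ n, (nSeries F n).subst x.val = (n • x).val
  | 0 => by rw [nSeries, ← PowerSeries.coe_substAlgHom x.prop, map_zero, zero_nsmul]; rfl
  | 1 => by simp [nSeries, PowerSeries.subst_X x.prop]
  | n + 2 => by
    have hX : PowerSeries.constantCoeff (PowerSeries.X : PowerSeries R) = 0 :=
      PowerSeries.constantCoeff_X
    rw [nSeries, subst2one_eq_subst hX (hF.constantCoeff_nSeries (n + 1)), succ_nsmul',
      FormalGroup.add_apply, ← hF.subst_nSeries_eq_nsmul x (n + 1), PowerSeries.subst_def,
      MvPowerSeries.subst_comp_subst_apply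
        (MvPowerSeries.hasSubst_pair hX (hF.constantCoeff_nSeries _)) x.prop.const]
    congr 1
    funext i
    fin_cases i
    exacts [PowerSeries.subst_X x.prop, rfl]

theorem nSeries_map_add (hF : IsFGL F) (n : ℕ) :
    (nSeries F n).subst F = MvPowerSeries.subst
      ![(nSeries F n).subst (MvPowerSeries.X 0 : MvPowerSeries (Fin 2) R),
        (nSeries F n).subst (MvPowerSeries.X 1 : MvPowerSeries (Fin 2) R)] F := by
  have := hF.isComm
  let x : hF.toFormalGroup.Point (Fin 2) := ⟨MvPowerSeries.X 0, .X 0⟩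
  let y : hF.toFormalGroup.Point (Fin 2) := ⟨MvPowerSeries.X 1, .X 1⟩
  let z : hF.toFormalGroup.Point (Fin 2) := ⟨F, .of_constantCoeff_zero hF.constantCoeff_eq_zero⟩
  have hxy : x + y = z := by
    refine Subtype.ext ?_
    show MvPowerSeries.subst ![MvPowerSeries.X 0, MvPowerSeries.X 1] F = F
    rw [show ![MvPowerSeries.X 0, MvPowerSeries.X 1] = (MvPowerSeries.X : Fin 2 → _) by
      funext i; fin_cases i <;> rfl, MvPowerSeries.subst_self]
    rfl
  calc (nSeries F n).subst F = (n • (x + y)).val := by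
        rw [hxy]; exact hF.subst_nSeries_eq_nsmul z n
    _ = (n • x + n • y).val := by rw [nsmul_add]
    _ = _ := by
        rw [FormalGroup.add_apply, ← hF.subst_nSeries_eq_nsmul, ← hF.subst_nSeries_eq_nsmul]
        rfl

theorem coeff_one_nSeries (hF : IsFGL F) : ∀ n, PowerSeries.coeff 1 (nSeries F n) = n
  | 0 => by simp [nSeries]
  | 1 => by simp [nSeries]
  | n + 2 => by
    have hX : PowerSeries.constantCoeff (PowerSeries.X : PowerSeries R) = 0 :=
      PowerSeries.constantCoeff_X
    have hord {f : PowerSeries R} (hf : PowerSeries.constantCoeff f = 0) :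
        ((1 : ℕ) : ℕ∞) ≤ MvPowerSeries.order f := by
      simpa using MvPowerSeries.one_le_order_iff_constCoeff_eq_zero.2 hf
    have h := hF.toFormalGroup.coeff_subst_eq_add one_ne_zero (hord hX)
      (hord (hF.constantCoeff_nSeries (n + 1))) (e := Finsupp.single () 1) (by simp)
    rw [hF.toFormalGroup_toPowerSeries] at h
    rw [nSeries, subst2one_eq_subst hX (hF.constantCoeff_nSeries (n + 1))]
    show MvPowerSeries.coeff (Finsupp.single () 1) _ = _
    rw [h]
    show PowerSeries.coeff 1 PowerSeries.X + PowerSeries.coeff 1 (nSeries F (n + 1)) = _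
    rw [hF.coeff_one_nSeries (n + 1), PowerSeries.coeff_X, if_pos rfl]
    push_cast
    ring

theorem natCast_mul_coeff_eq_zero_of_map_add (hF : IsFGL F) {f : PowerSeries R}
    (hf : f.subst F = MvPowerSeries.subst
      ![f.subst (MvPowerSeries.X 0 : MvPowerSeries (Fin 2) R),
        f.subst (MvPowerSeries.X 1 : MvPowerSeries (Fin 2) R)] F)
    {m : ℕ} (hm : m ≠ 0) (hord : ((m + 1 : ℕ) : ℕ∞) ≤ f.order) :
    ((m + 1 : ℕ) : R) * PowerSeries.coeff (m + 1) f = 0 := by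
  -- compare the coefficients of `Xᵐ Y`: on the left `F ≡ X + Y` contributes `m + 1`,
  -- on the right `F(f X, f Y) ≡ f X + f Y` has no mixed monomials in this degree
  set e : Fin 2 →₀ ℕ := Finsupp.single 0 m + Finsupp.single 1 1
  have he : e.degree = m + 1 := by simp [e]
  have hX (i : Fin 2) :
      MvPowerSeries.constantCoeff (MvPowerSeries.X i : MvPowerSeries (Fin 2) R) = 0 :=
    MvPowerSeries.constantCoeff_X i
  have hX01 : MvPowerSeries.constantCoeff
      (MvPowerSeries.X 0 + MvPowerSeries.X 1 : MvPowerSeries (Fin 2) R) = 0 := by simp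
  have hfX (i : Fin 2) : ((m + 1 : ℕ) : ℕ∞) ≤
      (f.subst (MvPowerSeries.X i : MvPowerSeries (Fin 2) R)).order :=
    hord.trans (PowerSeries.le_order_subst_left (hX i))
  have hpow : MvPowerSeries.coeff e (F ^ (m + 1)) =
      MvPowerSeries.coeff e ((MvPowerSeries.X 0 + MvPowerSeries.X 1) ^ (m + 1)) := by
    rw [← sub_eq_zero, ← map_sub]
    refine MvPowerSeries.coeff_of_lt_order (lt_of_lt_of_le ?_ (MvPowerSeries.le_order_pow_sub_pow
      hF.constantCoeff_eq_zero hX01 hF.toFormalGroup.two_le_order_sub_X_add_X (m + 1)))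
    rw [he]
    exact_mod_cast Nat.lt_succ_self _
  have lhs : MvPowerSeries.coeff e (f.subst F) = PowerSeries.coeff (m + 1) f * (m + 1 : ℕ) := by
    rw [PowerSeries.coeff_subst_of_le_order_left hord hF.constantCoeff_eq_zero he, hpow,
      MvPowerSeries.coeff_X_zero_add_X_one_pow]
    push_cast
    rfl
  have rhs : MvPowerSeries.coeff e (MvPowerSeries.subst
      ![f.subst (MvPowerSeries.X 0 : MvPowerSeries (Fin 2) R),
        f.subst (MvPowerSeries.X 1 : MvPowerSeries (Fin 2) R)] F) = 0 := by
    have h := hF.toFormalGroup.coeff_subst_eq_add (Nat.succ_ne_zero m) (hfX 0) (hfX 1)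
      (by rw [he]; omega)
    rw [hF.toFormalGroup_toPowerSeries] at h
    rw [h, PowerSeries.coeff_subst_single, PowerSeries.coeff_subst_single, if_neg, if_neg,
      add_zero]
    · intro h
      simpa [e, hm] using DFunLike.congr_fun h 0
    · intro h
      simpa [e] using DFunLike.congr_fun h 1
  rw [mul_comm, ← lhs, hf, rhs]

theorem le_order_nSeries (hF : IsFGL F) {p : ℕ} (hp : p.Prime) (hchar : (p : R) = 0) :
    (p : ℕ∞) ≤ (nSeries F p).order := by
  suffices ∀ k ≤ p, (k : ℕ∞) ≤ (nSeries F p).order from this p le_rfl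
  intro k
  induction k with
  | zero => simp
  | succ k ih =>
    intro hk
    have hcoeff : PowerSeries.coeff k (nSeries F p) = 0 := by
      match k with
      | 0 => rw [PowerSeries.coeff_zero_eq_constantCoeff_apply, hF.constantCoeff_nSeries]
      | 1 => rw [hF.coeff_one_nSeries, hchar]
      | m + 2 =>
        refine (isUnit_natCast_of_lt_of_prime hp hchar (Nat.succ_ne_zero _)
          hk).mul_right_eq_zero.1 ?_
        exact hF.natCast_mul_coeff_eq_zero_of_map_add (hF.nSeries_map_add p) (Nat.succ_ne_zero m)
          (ih (by omega))
    refine PowerSeries.nat_le_order _ _ fun i hi => ?_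
    rcases Nat.lt_succ_iff_lt_or_eq.1 hi with hi | rfl
    · exact PowerSeries.coeff_of_lt_order i ((Nat.cast_lt.2 hi).trans_le (ih (by omega)))
    · exact hcoeff

end IsFGL

namespace IsFGLHom

theorem map_add (hF : IsFGL F) (hφ : IsFGLHom F G φ) {x y : MvPowerSeries τ R}
    (hxy : MvPowerSeries.HasSubst ![x, y]) :
    φ.subst (MvPowerSeries.subst ![x, y] F) = MvPowerSeries.subst ![φ.subst x, φ.subst y] G := by
  have hX (i : Fin 2) :
      MvPowerSeries.constantCoeff (MvPowerSeries.X i : MvPowerSeries (Fin 2) R) = 0 :=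
    MvPowerSeries.constantCoeff_X i
  have hφX (i : Fin 2) :
      MvPowerSeries.constantCoeff (φ.subst (MvPowerSeries.X i : MvPowerSeries (Fin 2) R)) = 0 :=
    PowerSeries.constantCoeff_subst_eq_zero (hX i) φ hφ.1
  have hsubst_X (i : Fin 2) : MvPowerSeries.subst ![x, y]
      (φ.subst (MvPowerSeries.X i : MvPowerSeries (Fin 2) R)) = φ.subst (![x, y] i) := by
    rw [MvPowerSeries.subst_powerSeries_subst (PowerSeries.HasSubst.X (S := R) i) hxy,
      MvPowerSeries.subst_X hxy]
  have h := hφ.2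
  rw [psubst_eq_subst hF.constantCoeff_eq_zero, psubst_eq_subst (hX 0), psubst_eq_subst (hX 1),
    subst2_eq_subst (hφX 0) (hφX 1)] at h
  replace h := congrArg (MvPowerSeries.subst ![x, y]) h
  rw [MvPowerSeries.subst_powerSeries_subst
      (.of_constantCoeff_zero hF.constantCoeff_eq_zero) hxy,
    MvPowerSeries.subst_comp_subst_apply (MvPowerSeries.hasSubst_pair (hφX 0) (hφX 1)) hxy] at h
  rw [h]
  congr 1
  funext i
  fin_cases i
  exacts [hsubst_X 0, hsubst_X 1]

def pointAddMonoidHom (hF : IsFGL F) (hG : IsFGL G) (hφ : IsFGLHom F G φ) :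
    hF.toFormalGroup.Point τ →+ hG.toFormalGroup.Point τ where
  toFun x := ⟨φ.subst x.val, MvPowerSeries.IsNilpotent_subst x.prop.const (f := φ)
    (by rw [show MvPowerSeries.constantCoeff φ = 0 from hφ.1]; exact IsNilpotent.zero)⟩
  map_zero' := Subtype.ext <| PowerSeries.subst_zero_of_constantCoeff_zero hφ.1
  map_add' x y := Subtype.ext <| hφ.map_add hF (FormalGroup.Point.hasSubst_pair x y)

theorem subst_nSeries (hF : IsFGL F) (hG : IsFGL G) (hφ : IsFGLHom F G φ) (n : ℕ) :
    φ.subst (nSeries F n) = (nSeries G n).subst φ := by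
  let T : hF.toFormalGroup.Point Unit := ⟨PowerSeries.X, PowerSeries.HasSubst.X'⟩
  calc φ.subst (nSeries F n) = (hφ.pointAddMonoidHom hF hG (n • T)).val := by
        show _ = φ.subst (n • T).val
        rw [← hF.subst_nSeries_eq_nsmul T, PowerSeries.X_subst]
    _ = (n • hφ.pointAddMonoidHom hF hG T).val := by rw [map_nsmul]
    _ = (nSeries G n).subst φ := by
        rw [← hG.subst_nSeries_eq_nsmul]
        exact congrArg (nSeries G n).subst (PowerSeries.X_subst φ)

end IsFGLHom

theorem coeff_one_mul_coeff_one_of_pcomp_eq_X {φ ψ : PowerSeries R}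
    (h : pcomp φ ψ = PowerSeries.X) : PowerSeries.coeff 1 ψ * PowerSeries.coeff 1 φ = 1 := by
  have h1 := congrArg (PowerSeries.coeff 1) h
  rw [pcomp, PowerSeries.coeff_mk, Finset.sum_range_succ, Finset.sum_range_one] at h1
  simpa using h1

end FGL

namespace FGL

theorem v1_invariant_general {R : Type*} [CommRing R] (p : ℕ) (hp : p.Prime) (hchar : (p : R) = 0)
    (F₁ F₂ : MvPowerSeries (Fin 2) R) (hF₁ : IsFGL F₁) (hF₂ : IsFGL F₂)
    (φ ψ : PowerSeries R) (hφ : IsFGLHom F₁ F₂ φ)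
    (h1 : pcomp φ ψ = PowerSeries.X) :
    PowerSeries.coeff p (nSeries F₁ p)
      = (PowerSeries.coeff 1 φ) ^ (p - 1) * PowerSeries.coeff p (nSeries F₂ p) := by
  set b := PowerSeries.coeff 1 φ
  have hdeg : (Finsupp.single () p).degree = p := Finsupp.degree_single () p
  have key := congrArg (MvPowerSeries.coeff (Finsupp.single () p)) (hφ.subst_nSeries hF₁ hF₂ p)
  rw [PowerSeries.coeff_subst_of_le_order_right φ hp.ne_zero
      (by rw [← PowerSeries.order_eq_order]; exact hF₁.le_order_nSeries hp hchar) hdeg,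
    PowerSeries.coeff_subst_of_le_order_left (hF₂.le_order_nSeries hp hchar) hφ.1 hdeg] at key
  change b * PowerSeries.coeff p (nSeries F₁ p) =
    PowerSeries.coeff p (nSeries F₂ p) * PowerSeries.coeff p (φ ^ p) at key
  rw [PowerSeries.coeff_pow_self_of_constantCoeff_eq_zero hφ.1,
    ← pow_sub_one_mul hp.ne_zero] at key
  linear_combination PowerSeries.coeff 1 ψ * key -
    (PowerSeries.coeff p (nSeries F₁ p) - b ^ (p - 1) * PowerSeries.coeff p (nSeries F₂ p)) *
      coeff_one_mul_coeff_one_of_pcomp_eq_X h1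

/-- Over an `𝔽_p`-algebra `R`, if `φ : F₁ → F₂` is an isomorphism of formal
group laws, `u₁`, `u₂` are the coefficients of `T^p` in the `p`-series of `F₁`, `F₂`, and
`b = φ′(0)`, then `u₁ = b^(p-1) · u₂`; that is, `v₁ = u₁ · η^{⊗(p-1)}` is an isomorphism
invariant. -/
theorem v1_invariant {R : Type*} [CommRing R] (p : ℕ) (hp : p.Prime) (hchar : (p : R) = 0)
    (F₁ F₂ : MvPowerSeries (Fin 2) R) (hF₁ : IsFGL F₁) (hF₂ : IsFGL F₂)
    (φ ψ : PowerSeries R) (hφ : IsFGLHom F₁ F₂ φ) (hψ : IsFGLHom F₂ F₁ ψ)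
    (h1 : pcomp φ ψ = PowerSeries.X) (h2 : pcomp ψ φ = PowerSeries.X) :
    PowerSeries.coeff p (nSeries F₁ p)
      = (PowerSeries.coeff 1 φ) ^ (p - 1) * PowerSeries.coeff p (nSeries F₂ p) :=
  v1_invariant_general p hp hchar F₁ F₂ hF₁ hF₂ φ ψ hφ h1

end FGL
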